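/- arXiv:2103.15101 — 7 statements merged into one kernel-verified Lean document; each statement's English description precedes it below -/
import Mathlib

section
/- Let L be a lattice in (V, B) and p a prime not dividing det L. Let v ∈ L with v ∉ pL and B(v,v) ∈ p²ℤ. Then L(v) := L_v + ℤ·(v/p), where L_v = {x ∈ L : B(x,v) ∈ pℤ}, is again a lattice in V (in particular B takes integer values on L(v)), and L(v) is a p-neighbor of L. -/
/-!
As `p ∤ det L`, the Gram matrix of `L` is invertible mod `p`, so `v ∉ pL` yields `x₀ ∈ L`
with `p ∤ B(x₀, v)`. Then `x ↦ B(x, v) mod p` maps `L` onto `ℤ/p` with kernel `L ∩ L(v)`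
(every element of `L(v)` pairs with `v` into `pℤ` because `B(v, v) ∈ p²ℤ`), and
`x ↦ p·B(x, x₀) mod p` maps `L(v)` onto `ℤ/p` with kernel `L ∩ L(v)`; so both indices are `p`.
-/

/-- A (full, integral) ℤ-lattice in a ℚ-quadratic space `(V, B)`: a finitely generated
ℤ-submodule spanning `V` over ℚ on which `B` takes integer values. -/
def IsLatticeIn {V : Type*} [AddCommGroup V] [Module ℚ V]
    (B : LinearMap.BilinForm ℚ V) (L : Submodule ℤ V) : Prop :=
  L.FG ∧ Submodule.span ℚ (L : Set V) = ⊤ ∧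
    ∀ x ∈ L, ∀ y ∈ L, ∃ n : ℤ, B x y = (n : ℚ)

/-- The index `[L : L ∩ L']` of the intersection of two ℤ-submodules in the first one. -/
noncomputable def subIndex {V : Type*} [AddCommGroup V] [Module ℚ V]
    (L L' : Submodule ℤ V) : ℕ :=
  AddSubgroup.relIndex L'.toAddSubgroup L.toAddSubgroup

/-- Two lattices `L, L'` in `V` are `p`-neighbors if `[L : L ∩ L'] = [L' : L ∩ L'] = p`. -/
def IsPNeighbor {V : Type*} [AddCommGroup V] [Module ℚ V] (p : ℕ)
    (L L' : Submodule ℤ V) : Prop :=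
  subIndex L L' = p ∧ subIndex L' L = p

/-- Kneser's neighbor `L(v) = L_v + ℤ·(v/p)` of `L` at the vector `v`, where
`L_v = {x ∈ L : B(x,v) ∈ pℤ}`. -/
noncomputable def neighborLattice {V : Type*} [AddCommGroup V] [Module ℚ V]
    (B : LinearMap.BilinForm ℚ V) (L : Submodule ℤ V) (p : ℕ) (v : V) :
    Submodule ℤ V :=
  (L ⊓ Submodule.comap ((LinearMap.flip B v).restrictScalars ℤ)
      (Submodule.span ℤ {(p : ℚ)})) ⊔ Submodule.span ℤ {((p : ℚ)⁻¹) • v}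

open Matrix in
theorem Matrix.dvd_of_dvd_mulVec {R ι : Type*} [CommRing R] [Fintype ι] [DecidableEq ι]
    {p : R} (hp : Prime p) {G : Matrix ι ι R} (hG : ¬ p ∣ G.det) {c : ι → R}
    (hc : ∀ i, p ∣ (G *ᵥ c) i) (j : ι) : p ∣ c j := by
  have hdet : G.det * c j = (G.adjugate *ᵥ (G *ᵥ c)) j := by
    rw [mulVec_mulVec, adjugate_mul, smul_mulVec, one_mulVec, Pi.smul_apply, smul_eq_mul]
  have : p ∣ G.det * c j := hdet ▸ Finset.dvd_sum fun i _ => (hc i).mul_left _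
  exact (hp.dvd_or_dvd this).resolve_left hG

theorem AddSubgroup.relIndex_eq_prime_of_ker {G : Type*} [AddGroup G] {H K : AddSubgroup G}
    {p : ℕ} [Fact p.Prime] (g : K →+ ZMod p) (hker : g.ker = H.addSubgroupOf K) (hg : g ≠ 0) :
    H.relIndex K = p := by
  have : Fact (Nat.card (ZMod p)).Prime := by rwa [Nat.card_zmod]
  have hrange : g.range = ⊤ := g.range.eq_bot_or_eq_top_of_prime_card.resolve_left
    (hg ∘ AddMonoidHom.range_eq_bot_iff.mp)
  rw [relIndex, ← hker, index_ker, hrange, card_top, Nat.card_zmod]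

theorem AddSubgroup.relIndex_eq_prime_of_mem_iff_dvd {G : Type*} [AddGroup G]
    {H K : AddSubgroup G} {p : ℕ} (hp : p.Prime) (f : G →+ ℚ)
    (hf : ∀ x ∈ K, ∃ n : ℤ, f x = n) (hker : ∀ x ∈ K, x ∈ H ↔ ∃ n : ℤ, f x = p * n)
    (hx : ∃ x ∈ K, ∃ n : ℤ, f x = n ∧ ¬ (p : ℤ) ∣ n) : H.relIndex K = p := by
  have := Fact.mk hp
  choose! n hn using hf
  have hn_add : ∀ x y : K, n (x + y : K) = n x + n y := fun x y => by
    have := hn _ (x + y).2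
    rw [coe_add, map_add, hn _ x.2, hn _ y.2] at this
    exact_mod_cast this.symm
  let g : K →+ ZMod p := AddMonoidHom.mk' (fun x => (n x : ZMod p)) fun x y => by
    simp only [hn_add, Int.cast_add]
  refine relIndex_eq_prime_of_ker g ?_ ?_
  · ext x
    rw [AddMonoidHom.mem_ker, mem_addSubgroupOf, hker _ x.2, hn _ x.2]
    exact (ZMod.intCast_zmod_eq_zero_iff_dvd _ _).trans (exists_congr fun m => by norm_cast)
  · obtain ⟨x, hxK, m, hm, hpm⟩ := hx
    have hnx : n x = m := by exact_mod_cast (hn x hxK).symm.trans hm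
    exact fun h0 => hpm (hnx ▸ (ZMod.intCast_zmod_eq_zero_iff_dvd _ _).mp
      (DFunLike.congr_fun h0 ⟨x, hxK⟩))

section NeighborLattice

variable {V : Type*} [AddCommGroup V] [Module ℚ V] {B : LinearMap.BilinForm ℚ V}
  {L : Submodule ℤ V} {p : ℕ} {v : V}

theorem mem_neighborLattice_iff {x : V} :
    x ∈ neighborLattice B L p v ↔
      ∃ y ∈ L, (∃ n : ℤ, B y v = p * n) ∧ ∃ k : ℤ, x = y + k • (p : ℚ)⁻¹ • v := by
  simp only [neighborLattice, Submodule.mem_sup, Submodule.mem_inf, Submodule.mem_comap,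
    Submodule.mem_span_singleton, LinearMap.coe_restrictScalars, LinearMap.flip_apply,
    zsmul_eq_mul, mul_comm (p : ℚ)]
  constructor
  · rintro ⟨y, ⟨hyL, n, hn⟩, _, ⟨k, rfl⟩, rfl⟩
    exact ⟨y, hyL, ⟨n, hn.symm⟩, k, rfl⟩
  · rintro ⟨y, hyL, ⟨n, hn⟩, k, rfl⟩
    exact ⟨y, ⟨hyL, n, hn.symm⟩, _, ⟨k, rfl⟩, rfl⟩

theorem mem_neighborLattice_of_mem {x : V} (hx : x ∈ L) (hxv : ∃ n : ℤ, B x v = p * n) :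
    x ∈ neighborLattice B L p v :=
  mem_neighborLattice_iff.mpr ⟨x, hx, hxv, 0, by simp⟩

theorem exists_eq_mul_of_mem_neighborLattice (hvv : ∃ n : ℤ, B v v = (p : ℚ) ^ 2 * n)
    {x : V} (hx : x ∈ neighborLattice B L p v) : ∃ n : ℤ, B x v = p * n := by
  obtain ⟨y, -, ⟨m, hm⟩, k, rfl⟩ := mem_neighborLattice_iff.mp hx
  obtain ⟨n, hn⟩ := hvv
  refine ⟨m + k * n, ?_⟩
  simp only [map_add, map_zsmul, map_smul, LinearMap.add_apply, LinearMap.smul_apply,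
    smul_eq_mul, zsmul_eq_mul, hm, hn]
  push_cast
  linear_combination (k * n : ℚ) * inv_mul_mul_self (p : ℚ)

theorem neighborLattice_fg (hL : L.FG) : (neighborLattice B L p v).FG :=
  (hL.of_le inf_le_left).sup (Submodule.fg_span_singleton _)

theorem span_neighborLattice_eq_top (hp : p ≠ 0) (hLv : ∀ x ∈ L, ∃ n : ℤ, B x v = n)
    (hspan : Submodule.span ℚ (L : Set V) = ⊤) :
    Submodule.span ℚ (neighborLattice B L p v : Set V) = ⊤ := by
  refine eq_top_iff.mpr (hspan ▸ Submodule.span_le.mpr fun x hx => ?_)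
  obtain ⟨n, hn⟩ := hLv x hx
  have hpx : (p : ℚ) • x ∈ neighborLattice B L p v := by
    refine mem_neighborLattice_of_mem ?_ ⟨n, ?_⟩
    · exact_mod_cast L.smul_mem (p : ℤ) hx
    · rw [map_smul, LinearMap.smul_apply, hn, smul_eq_mul]
  have hp' : (p : ℚ) ≠ 0 := Nat.cast_ne_zero.mpr hp
  simpa [smul_smul, hp'] using
    Submodule.smul_mem _ (p : ℚ)⁻¹ (Submodule.subset_span (R := ℚ) hpx)

theorem neighborLattice_integral (hB : B.IsSymm) (hp : p ≠ 0)
    (hL : ∀ x ∈ L, ∀ y ∈ L, ∃ n : ℤ, B x y = n) (hvv : ∃ n : ℤ, B v v = (p : ℚ) ^ 2 * n) :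
    ∀ x ∈ neighborLattice B L p v, ∀ y ∈ neighborLattice B L p v, ∃ n : ℤ, B x y = n := by
  intro x hx y hy
  obtain ⟨x', hx'L, ⟨m, hm⟩, k, rfl⟩ := mem_neighborLattice_iff.mp hx
  obtain ⟨y', hy'L, ⟨m', hm'⟩, l, rfl⟩ := mem_neighborLattice_iff.mp hy
  obtain ⟨n, hn⟩ := hL x' hx'L y' hy'L
  obtain ⟨r, hr⟩ := hvv
  have hp' : (p : ℚ) ≠ 0 := Nat.cast_ne_zero.mpr hp
  refine ⟨n + l * m + k * m' + k * l * r, ?_⟩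
  simp only [map_add, map_zsmul, map_smul, LinearMap.add_apply, LinearMap.smul_apply,
    smul_eq_mul, zsmul_eq_mul, hn, hm, hB.eq v y', hm', hr]
  push_cast
  field_simp
  ring

open Matrix in
theorem exists_mem_pairing_not_dvd {ι : Type*} [Fintype ι] [DecidableEq ι] (hp : p.Prime)
    (hL : ∀ x ∈ L, ∀ y ∈ L, ∃ n : ℤ, B x y = n) (b : Module.Basis ι ℤ L)
    {d : ℤ} (hd : (Matrix.of fun i j => B (b i) (b j)).det = d) (hpd : ¬ (p : ℤ) ∣ d)
    (hvL : v ∈ L) (hvp : ¬ ∃ w ∈ L, v = (p : ℤ) • w) :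
    ∃ x ∈ L, ∃ n : ℤ, B x v = n ∧ ¬ (p : ℤ) ∣ n := by
  choose G hG using fun i j => hL _ (b i).2 _ (b j).2
  set c := b.repr ⟨v, hvL⟩
  have hv : v = ∑ j, c j • (b j : V) := by
    have := congrArg L.subtype (b.sum_repr ⟨v, hvL⟩)
    rw [map_sum] at this
    exact this.symm
  have hpair : ∀ i, B (b i) v = ((Matrix.of G *ᵥ c) i : ℤ) := fun i => by
    simp [hv, mulVec, dotProduct, hG, mul_comm]
  have hdetG : (Matrix.of G).det = d := by
    have : (Matrix.of G).map (Int.cast : ℤ → ℚ) = Matrix.of fun i j => B (b i) (b j) := by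
      ext; simp [hG]
    exact_mod_cast (Int.cast_det _).trans (this ▸ hd)
  by_contra! h
  have hc := Matrix.dvd_of_dvd_mulVec (Nat.prime_iff_prime_int.mp hp) (hdetG ▸ hpd)
    fun i => h _ (b i).2 _ (hpair i)
  choose e he using hc
  refine hvp ⟨∑ j, e j • (b j : V), L.sum_mem fun j _ => L.smul_mem _ (b j).2, ?_⟩
  simp only [hv, he, Finset.smul_sum, mul_smul]

variable {x₀ : V} {n₀ : ℤ}

theorem subIndex_neighborLattice_left (hp : p.Prime) (hLv : ∀ x ∈ L, ∃ n : ℤ, B x v = n)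
    (hvv : ∃ n : ℤ, B v v = (p : ℚ) ^ 2 * n) (hx₀ : x₀ ∈ L) (hx₀v : B x₀ v = n₀)
    (hn₀ : ¬ (p : ℤ) ∣ n₀) : subIndex L (neighborLattice B L p v) = p :=
  AddSubgroup.relIndex_eq_prime_of_mem_iff_dvd hp (LinearMap.flip B v).toAddMonoidHom hLv
    (fun _ hx => ⟨exists_eq_mul_of_mem_neighborLattice hvv, mem_neighborLattice_of_mem hx⟩)
    ⟨x₀, hx₀, n₀, hx₀v, hn₀⟩

theorem subIndex_neighborLattice_right (hB : B.IsSymm) (hp : p.Prime)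
    (hL : ∀ x ∈ L, ∀ y ∈ L, ∃ n : ℤ, B x y = n) (hvL : v ∈ L) (hx₀ : x₀ ∈ L)
    (hx₀v : B x₀ v = n₀) (hn₀ : ¬ (p : ℤ) ∣ n₀) : subIndex (neighborLattice B L p v) L = p := by
  have hp' : (p : ℚ) ≠ 0 := Nat.cast_ne_zero.mpr hp.ne_zero
  have hpair : ∀ y : V, ∀ k : ℤ,
      (p : ℚ) * B (y + k • (p : ℚ)⁻¹ • v) x₀ = p * B y x₀ + k * n₀ := fun y k => by
    simp only [map_add, map_zsmul, map_smul, LinearMap.add_apply, LinearMap.smul_apply,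
      smul_eq_mul, zsmul_eq_mul, hB.eq v x₀, hx₀v]
    field_simp
  refine AddSubgroup.relIndex_eq_prime_of_mem_iff_dvd hp
    ((p : ℚ) • LinearMap.flip B x₀).toAddMonoidHom (fun x hx => ?_) (fun x hx => ?_)
    ⟨(p : ℚ)⁻¹ • v, Submodule.mem_sup_right (Submodule.mem_span_singleton_self _), n₀,
      by simpa [hp'] using hpair 0 1, hn₀⟩
  all_goals simp only [LinearMap.toAddMonoidHom_coe, LinearMap.smul_apply,
    LinearMap.flip_apply, smul_eq_mul]
  · obtain ⟨y, hyL, -, k, rfl⟩ := mem_neighborLattice_iff.mp hx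
    obtain ⟨m, hm⟩ := hL y hyL x₀ hx₀
    exact ⟨p * m + k * n₀, by rw [hpair, hm]; push_cast; ring⟩
  · obtain ⟨y, hyL, -, k, rfl⟩ := mem_neighborLattice_iff.mp hx
    obtain ⟨m, hm⟩ := hL y hyL x₀ hx₀
    refine ⟨fun hxL => ?_, fun ⟨n, hn⟩ => ?_⟩
    · obtain ⟨n, hn⟩ := hL _ hxL x₀ hx₀
      exact ⟨n, by rw [hn]⟩
    · rw [hpair, hm] at hn
      have hdvd : (p : ℤ) ∣ k * n₀ := ⟨n - m, by qify; linear_combination hn⟩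
      obtain ⟨k', rfl⟩ := ((Nat.prime_iff_prime_int.mp hp).dvd_or_dvd hdvd).resolve_right hn₀
      have : ((p : ℤ) * k') • (p : ℚ)⁻¹ • v = k' • v := by
        rw [mul_comm, mul_smul, ← Int.cast_smul_eq_zsmul ℚ (p : ℤ), smul_smul]
        simp [hp']
      rw [this]
      exact L.add_mem hyL (L.smul_mem k' hvL)

end NeighborLattice

theorem neighborLattice_isLattice_and_pNeighbor_general {V : Type*} [AddCommGroup V]
    [Module ℚ V] (B : LinearMap.BilinForm ℚ V)
    (hBsymm : B.IsSymm)
    (L : Submodule ℤ V) (hL : IsLatticeIn B L)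
    (p : ℕ) (hp : p.Prime)
    (hdet : ∃ (b : Module.Basis (Fin (Module.finrank ℚ V)) ℤ L) (d : ℤ),
      Matrix.det (Matrix.of fun i j => B (b i : V) (b j : V)) = (d : ℚ) ∧ ¬ (p : ℤ) ∣ d)
    (v : V) (hvL : v ∈ L) (hvp : ¬ ∃ w ∈ L, v = (p : ℤ) • w)
    (hvv : ∃ n : ℤ, B v v = (p : ℚ) ^ 2 * (n : ℚ)) :
    IsLatticeIn B (neighborLattice B L p v) ∧ IsPNeighbor p L (neighborLattice B L p v) := by
  obtain ⟨hLfg, hLspan, hLint⟩ := hL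
  obtain ⟨b, d, hd, hpd⟩ := hdet
  obtain ⟨x₀, hx₀, n₀, hx₀v, hn₀⟩ := exists_mem_pairing_not_dvd hp hLint b hd hpd hvL hvp
  have hLv : ∀ x ∈ L, ∃ n : ℤ, B x v = n := fun x hx => hLint x hx v hvL
  exact ⟨⟨neighborLattice_fg hLfg, span_neighborLattice_eq_top hp.ne_zero hLv hLspan,
      neighborLattice_integral hBsymm hp.ne_zero hLint hvv⟩,
    subIndex_neighborLattice_left hp hLv hvv hx₀ hx₀v hn₀,
    subIndex_neighborLattice_right hBsymm hp hLint hvL hx₀ hx₀v hn₀⟩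

/-- if `p ∤ det L`, `v ∈ L \ pL` and `B(v,v) ∈ p²ℤ`, then
`L(v) = L_v + ℤ·(v/p)` is again a lattice in `V` and is a `p`-neighbor of `L`. -/
theorem neighborLattice_isLattice_and_pNeighbor {V : Type*} [AddCommGroup V]
    [Module ℚ V] [FiniteDimensional ℚ V] (B : LinearMap.BilinForm ℚ V)
    (hBnd : B.Nondegenerate) (hBsymm : B.IsSymm)
    (L : Submodule ℤ V) (hL : IsLatticeIn B L)
    (p : ℕ) (hp : p.Prime)
    (hdet : ∃ (b : Module.Basis (Fin (Module.finrank ℚ V)) ℤ L) (d : ℤ),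
      Matrix.det (Matrix.of fun i j => B (b i : V) (b j : V)) = (d : ℚ) ∧ ¬ (p : ℤ) ∣ d)
    (v : V) (hvL : v ∈ L) (hvp : ¬ ∃ w ∈ L, v = (p : ℤ) • w)
    (hvv : ∃ n : ℤ, B v v = (p : ℚ) ^ 2 * (n : ℚ)) :
    IsLatticeIn B (neighborLattice B L p v) ∧ IsPNeighbor p L (neighborLattice B L p v) :=
  neighborLattice_isLattice_and_pNeighbor_general B hBsymm L hL p hp hdet v hvL hvp hvv
end

section
/- Let L be a lattice in (V, B) and p a prime not dividing det L. Then every p-neighbor L' of L in V is of the form L' = L(v) := {x ∈ L : B(x,v) ∈ pℤ} + ℤ·(v/p) for some v ∈ L with v ∉ pL and B(v,v) ∈ p²ℤ. -/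
/-!
Pick `v' ∈ L' \ L` and put `v = p v'`; it lies in `L` because `[L' : L ∩ L'] = p`, and not in
`pL` because `v' ∉ L`. Integrality of `B` on `L'` gives `B(v,v) ∈ p²ℤ` and `L ∩ L' ⊆ L_v ⊆ L`.
As `p ∤ det L`, the functional `B(·, v)` is nonzero mod `p` on `L`, so `L_v ≠ L`, and primality of
`[L : L ∩ L'] = p` forces `L_v = L ∩ L'`. Likewise `L ∩ L' ⊊ L ∩ L' + ℤ v' ⊆ L'` forces
`L' = L ∩ L' + ℤ v' = L(v)`.
-/

namespace Matrix

theorem dvd_of_dvd_mulVec_s5 {R n : Type*} [CommRing R] [Fintype n] [DecidableEq n]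
    {p : R} (hp : Prime p) {G : Matrix n n R} (hG : ¬ p ∣ G.det) {c : n → R}
    (h : ∀ i, p ∣ (G *ᵥ c) i) (j : n) : p ∣ c j := by
  have hadj : G.det • c = G.adjugate *ᵥ (G *ᵥ c) := by
    rw [mulVec_mulVec, adjugate_mul, smul_mulVec, one_mulVec]
  have hdet : p ∣ G.det * c j := by
    rw [← smul_eq_mul, ← Pi.smul_apply, hadj]
    exact Finset.dvd_sum fun k _ => dvd_mul_of_dvd_right (h k) _
  exact (hp.dvd_or_dvd hdet).resolve_left hG

end Matrix

theorem zsmul_injective_of_module_rat {V : Type*} [AddCommGroup V] [Module ℚ V] {n : ℤ}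
    (hn : n ≠ 0) : Function.Injective fun x : V => n • x := by
  intro x y h
  have := congrArg (fun z : V => (n : ℚ)⁻¹ • z) h
  simpa [← Int.cast_smul_eq_zsmul ℚ, smul_smul, hn] using this

section Lattice

open Matrix

variable {V : Type*} [AddCommGroup V] [Module ℚ V] (B : LinearMap.BilinForm ℚ V)

/-- Since `p ∤ det`, the Gram matrix is invertible mod `p`, so `B(·, v) ≡ 0 mod p` on `L`
forces every coordinate of `v` to vanish mod `p`. -/
theorem exists_eq_smul_of_forall_dvd_bilin {ι : Type*} [Fintype ι] [DecidableEq ι]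
    {L : Submodule ℤ V} (hLint : ∀ x ∈ L, ∀ y ∈ L, ∃ n : ℤ, B x y = (n : ℚ))
    (b : Module.Basis ι ℤ L) {p : ℕ} (hp : p.Prime) {d : ℤ}
    (hd : Matrix.det (Matrix.of fun i j => B (b i : V) (b j : V)) = (d : ℚ))
    (hpd : ¬ (p : ℤ) ∣ d) {v : V} (hv : v ∈ L)
    (hdvd : ∀ x ∈ L, ∃ m : ℤ, B x v = (p : ℚ) * (m : ℚ)) :
    ∃ w ∈ L, v = (p : ℤ) • w := by
  choose G hG using fun i j => hLint _ (b i).2 _ (b j).2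
  have hGd : (Matrix.of G).det = d := by
    rw [← Int.cast_inj (α := ℚ), ← hd, Int.cast_det]
    congr 1
    ext i j
    exact (hG i j).symm
  set c := b.repr ⟨v, hv⟩
  have hvc : v = ∑ j, c j • (b j : V) := by
    have := congrArg Subtype.val (b.sum_repr ⟨v, hv⟩)
    push_cast at this
    exact this.symm
  have hGc : ∀ i, (p : ℤ) ∣ (Matrix.of G *ᵥ c) i := by
    intro i
    obtain ⟨m, hm⟩ := hdvd _ (b i).2
    refine ⟨m, Int.cast_injective (α := ℚ) ?_⟩
    push_cast
    rw [← hm, hvc, map_sum]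
    simp [Matrix.mulVec, dotProduct, hG, mul_comm]
  choose e he using Matrix.dvd_of_dvd_mulVec_s5 (Nat.prime_iff_prime_int.1 hp)
    (hGd ▸ hpd) hGc
  refine ⟨∑ j, e j • (b j : V), Submodule.sum_mem _ fun j _ => L.smul_mem _ (b j).2, ?_⟩
  simp only [hvc, Finset.smul_sum, smul_smul, he]

end Lattice

theorem Submodule.le_or_le_of_relIndex_prime {R M : Type*} [Ring R] [AddCommGroup M]
    [Module R M] {N K L : Submodule R M} (hNK : N ≤ K) (hKL : K ≤ L)
    (hp : (N.toAddSubgroup.relIndex L.toAddSubgroup).Prime) : K ≤ N ∨ L ≤ K := by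
  rw [← AddSubgroup.relIndex_mul_relIndex _ _ _ ((toAddSubgroup_le _ _).2 hNK)
    ((toAddSubgroup_le _ _).2 hKL), Nat.prime_mul_iff] at hp
  rcases hp with ⟨-, h⟩ | ⟨-, h⟩
  · exact .inr ((toAddSubgroup_le _ _).1 (AddSubgroup.relIndex_eq_one.1 h))
  · exact .inl ((toAddSubgroup_le _ _).1 (AddSubgroup.relIndex_eq_one.1 h))

section SubIndex

variable {V : Type*} [AddCommGroup V] [Module ℚ V] {L L' : Submodule ℤ V}

theorem subIndex_eq_one_iff : subIndex L L' = 1 ↔ L ≤ L' :=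
  AddSubgroup.relIndex_eq_one.trans (Submodule.toAddSubgroup_le _ _)

theorem relIndex_inf_eq_subIndex (L L' : Submodule ℤ V) :
    (L' ⊓ L).toAddSubgroup.relIndex L.toAddSubgroup = subIndex L L' :=
  AddSubgroup.inf_relIndex_right L'.toAddSubgroup L.toAddSubgroup

theorem subIndex_smul_mem {x : V} (hx : x ∈ L) : (subIndex L L' : ℤ) • x ∈ L' := by
  rw [natCast_zsmul]
  exact L'.toAddSubgroup.nsmul_relIndex_mem hx

end SubIndex

section Neighbor

variable {V : Type*} [AddCommGroup V] [Module ℚ V] (B : LinearMap.BilinForm ℚ V)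

/-- The lattice `L_v` in the docstring of `neighborLattice`. -/
def neighborCore (L : Submodule ℤ V) (p : ℕ) (v : V) : Submodule ℤ V :=
  L ⊓ Submodule.comap ((LinearMap.flip B v).restrictScalars ℤ) (Submodule.span ℤ {(p : ℚ)})

theorem neighborLattice_eq_sup (L : Submodule ℤ V) (p : ℕ) (v : V) :
    neighborLattice B L p v = neighborCore B L p v ⊔ Submodule.span ℤ {(p : ℚ)⁻¹ • v} :=
  rfl

variable {B}

theorem mem_neighborCore {L : Submodule ℤ V} {p : ℕ} {v x : V} :
    x ∈ neighborCore B L p v ↔ x ∈ L ∧ ∃ m : ℤ, B x v = (p : ℚ) * (m : ℚ) := by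
  simp only [neighborCore, Submodule.mem_inf, Submodule.mem_comap,
    LinearMap.restrictScalars_apply, LinearMap.flip_apply, Submodule.mem_span_singleton,
    zsmul_eq_mul, mul_comm, eq_comm]

variable {L L' : Submodule ℤ V} {p : ℕ}

theorem inf_le_neighborCore (hL'int : ∀ x ∈ L', ∀ y ∈ L', ∃ n : ℤ, B x y = (n : ℚ))
    {v' : V} (hv' : v' ∈ L') : L ⊓ L' ≤ neighborCore B L p ((p : ℤ) • v') := by
  rintro x ⟨hxL, hxL'⟩
  obtain ⟨m, hm⟩ := hL'int x hxL' v' hv'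
  exact mem_neighborCore.2 ⟨hxL, m, by rw [map_zsmul, hm, zsmul_eq_mul]; push_cast; ring⟩

theorem neighborCore_eq_inf {ι : Type*} [Fintype ι] [DecidableEq ι]
    (hLint : ∀ x ∈ L, ∀ y ∈ L, ∃ n : ℤ, B x y = (n : ℚ))
    (hL'int : ∀ x ∈ L', ∀ y ∈ L', ∃ n : ℤ, B x y = (n : ℚ))
    (b : Module.Basis ι ℤ L) (hp : p.Prime) {d : ℤ}
    (hd : Matrix.det (Matrix.of fun i j => B (b i : V) (b j : V)) = (d : ℚ))
    (hpd : ¬ (p : ℤ) ∣ d) (hLL' : subIndex L L' = p) {v' : V} (hv' : v' ∈ L')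
    (hv : (p : ℤ) • v' ∈ L) (hv_not_smul : ¬ ∃ w ∈ L, (p : ℤ) • v' = (p : ℤ) • w) :
    neighborCore B L p ((p : ℤ) • v') = L ⊓ L' := by
  refine le_antisymm ((Submodule.le_or_le_of_relIndex_prime
    (inf_le_neighborCore hL'int hv') inf_le_left
    (by rwa [inf_comm, relIndex_inf_eq_subIndex, hLL'])).resolve_right fun hL => ?_)
    (inf_le_neighborCore hL'int hv')
  exact hv_not_smul <| exists_eq_smul_of_forall_dvd_bilin B hLint b hp hd hpd hv
    fun x hx => (mem_neighborCore.1 (hL hx)).2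

theorem inf_sup_span_singleton_eq (hL'L : (subIndex L' L).Prime) {v' : V} (hv'L' : v' ∈ L')
    (hv'L : v' ∉ L) : L ⊓ L' ⊔ Submodule.span ℤ {v'} = L' := by
  have hsup : L ⊓ L' ⊔ Submodule.span ℤ {v'} ≤ L' :=
    sup_le inf_le_right ((Submodule.span_singleton_le_iff_mem _ _).2 hv'L')
  refine le_antisymm hsup ((Submodule.le_or_le_of_relIndex_prime le_sup_left hsup
    (by rwa [relIndex_inf_eq_subIndex])).resolve_left fun h => hv'L ?_)
  exact (h (Submodule.mem_sup_right (Submodule.mem_span_singleton_self v'))).1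

end Neighbor

theorem pNeighbor_eq_neighborLattice_general {V : Type*} [AddCommGroup V]
    [Module ℚ V] (B : LinearMap.BilinForm ℚ V)
    (L : Submodule ℤ V) (hL : IsLatticeIn B L)
    (p : ℕ) (hp : p.Prime)
    (hdet : ∃ (b : Module.Basis (Fin (Module.finrank ℚ V)) ℤ L) (d : ℤ),
      Matrix.det (Matrix.of fun i j => B (b i : V) (b j : V)) = (d : ℚ) ∧ ¬ (p : ℤ) ∣ d)
    (L' : Submodule ℤ V) (hL' : IsLatticeIn B L')
    (hneighbor : IsPNeighbor p L L') :
    ∃ v ∈ L, (¬ ∃ w ∈ L, v = (p : ℤ) • w) ∧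
      (∃ n : ℤ, B v v = (p : ℚ) ^ 2 * (n : ℚ)) ∧
      L' = neighborLattice B L p v := by
  obtain ⟨b, d, hd, hpd⟩ := hdet
  obtain ⟨hLL', hL'L⟩ := hneighbor
  obtain ⟨v', hv'L', hv'L⟩ : ∃ v' ∈ L', v' ∉ L :=
    SetLike.not_le_iff_exists.1 fun h => hp.ne_one (hL'L ▸ subIndex_eq_one_iff.2 h)
  have hv : (p : ℤ) • v' ∈ L := hL'L ▸ subIndex_smul_mem hv'L'
  have hv_not_smul : ¬ ∃ w ∈ L, (p : ℤ) • v' = (p : ℤ) • w := fun ⟨w, hw, h⟩ =>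
    hv'L (zsmul_injective_of_module_rat (by exact_mod_cast hp.ne_zero) h ▸ hw)
  have hv_div : (p : ℚ)⁻¹ • ((p : ℤ) • v') = v' := by
    rw [← Int.cast_smul_eq_zsmul ℚ, smul_smul]
    simp [hp.ne_zero]
  obtain ⟨n, hn⟩ := hL'.2.2 v' hv'L' v' hv'L'
  refine ⟨_, hv, hv_not_smul, ⟨n, ?_⟩, ?_⟩
  · simp only [map_zsmul, LinearMap.smul_apply, hn, zsmul_eq_mul]
    push_cast
    ring
  rw [neighborLattice_eq_sup, neighborCore_eq_inf hL.2.2 hL'.2.2 b hp hd hpd hLL' hv'L' hv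
    hv_not_smul, hv_div, inf_sup_span_singleton_eq (hL'L ▸ hp) hv'L' hv'L]

/-- if `p ∤ det L`, then every `p`-neighbor `L'` of `L` is of the form
`L(v) = {x ∈ L : B(x,v) ∈ pℤ} + ℤ·(v/p)` for some `v ∈ L` with `v ∉ pL` and
`B(v,v) ∈ p²ℤ`. -/
theorem pNeighbor_eq_neighborLattice {V : Type*} [AddCommGroup V]
    [Module ℚ V] [FiniteDimensional ℚ V] (B : LinearMap.BilinForm ℚ V)
    (hBnd : B.Nondegenerate) (hBsymm : B.IsSymm)
    (L : Submodule ℤ V) (hL : IsLatticeIn B L)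
    (p : ℕ) (hp : p.Prime)
    (hdet : ∃ (b : Module.Basis (Fin (Module.finrank ℚ V)) ℤ L) (d : ℤ),
      Matrix.det (Matrix.of fun i j => B (b i : V) (b j : V)) = (d : ℚ) ∧ ¬ (p : ℤ) ∣ d)
    (L' : Submodule ℤ V) (hL' : IsLatticeIn B L')
    (hneighbor : IsPNeighbor p L L') :
    ∃ v ∈ L, (¬ ∃ w ∈ L, v = (p : ℤ) • w) ∧
      (∃ n : ℤ, B v v = (p : ℚ) ^ 2 * (n : ℚ)) ∧
      L' = neighborLattice B L p v :=
  pNeighbor_eq_neighborLattice_general B L hL p hp hdet L' hL' hneighbor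
end

section
/- Let L₁ be an even ℤ-lattice and p a prime not dividing det L₁. Let v ∈ L₁ with v ∉ pL₁ and ⟨v,v⟩ ∈ 2p²ℤ. Let U₁ = ℤe₁ ⊕ ℤf₁ be a hyperbolic plane (⟨e₁,e₁⟩ = ⟨f₁,f₁⟩ = 0, ⟨e₁,f₁⟩ = 1), set N = U₁ ⊕ L₁, and set f₂ = −(⟨v,v⟩/(2p))·f₁ + p·e₁ + v. Suppose e₂ ∈ N satisfies ⟨e₂,e₂⟩ = 0 and ⟨e₂,f₂⟩ = 1. Then the orthogonal complement L₂ of ℤe₂ + ℤf₂ in N is isometric to the p-neighbor L₁(v) := {x ∈ L₁ : ⟨x,v⟩ ∈ pℤ} + ℤ·(v/p) of L₁, formed inside L₁ ⊗ ℚ. -/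
open TensorProduct

/-- The orthogonal direct sum `U ⊕ L` of a hyperbolic plane (with basis `e₁ = ((1,0),0)`,
`f₁ = ((0,1),0)`) and the bilinear module `(M, B)`, realised on `(ℤ × ℤ) × M`. -/
def hypSum {M : Type*} [AddCommGroup M] [Module ℤ M]
    (B : LinearMap.BilinForm ℤ M) : LinearMap.BilinForm ℤ ((ℤ × ℤ) × M) :=
  LinearMap.mk₂ ℤ (fun x y => x.1.1 * y.1.2 + x.1.2 * y.1.1 + B x.2 y.2)
    (by intros; simp; ring) (by intros; simp; ring)
    (by intros; simp; ring) (by intros; simp; ring)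

/-- The basis vector `e₁` of the hyperbolic plane in `U ⊕ L`. -/
def hypE₁ {M : Type*} [AddCommGroup M] [Module ℤ M] : (ℤ × ℤ) × M := ((1, 0), 0)

/-- The basis vector `f₁` of the hyperbolic plane in `U ⊕ L`. -/
def hypF₁ {M : Type*} [AddCommGroup M] [Module ℤ M] : (ℤ × ℤ) × M := ((0, 1), 0)

/-- The vector `f₂ = -(⟨v,v⟩/(2p))·f₁ + p·e₁ + v` in `U ⊕ L`. -/
def hypF₂ {M : Type*} [AddCommGroup M] [Module ℤ M]
    (B : LinearMap.BilinForm ℤ M) (p : ℕ) (v : M) : (ℤ × ℤ) × M :=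
  ((p, -(B v v / (2 * p))), v)

/-- The neighbor `L₁(v) = {x ∈ L₁ : ⟨x,v⟩ ∈ pℤ} + ℤ·(v/p)`, formed inside `L₁ ⊗ ℚ`. -/
noncomputable def neighborInQ {M : Type*} [AddCommGroup M] [Module ℤ M]
    (B : LinearMap.BilinForm ℤ M) (p : ℕ) (v : M) : Submodule ℤ (ℚ ⊗[ℤ] M) :=
  Submodule.map ((TensorProduct.mk ℤ ℚ M) 1)
      (Submodule.comap (LinearMap.flip B v) (Ideal.span {(p : ℤ)}))
    ⊔ Submodule.span ℤ {((p : ℚ)⁻¹) ⊗ₜ[ℤ] v}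

/-!
Let `f₂ = p e₁ + v - (p n) f₁` where `⟨v, v⟩ = 2p²n`, and let `Φ : U ⊕ L → L ⊗ ℚ`,
`x ↦ x_L - x_{e₁} (v / p)`. On `K = f₂^⊥` the map `Φ` is an isometry onto the neighbor `L(v)`,
and, because `v ∉ pL` and `L` is torsion-free, its kernel on `K` is `ℤ f₂`. As `f₂` is isotropic
and `⟨e₂, f₂⟩ = 1`, `K = (e₂, f₂)^⊥ ⊕ ℤ f₂`, so `Φ` maps `(e₂, f₂)^⊥` isometrically onto `L(v)`.
-/

theorem Int.dvd_of_smul_eq_smul_of_not_exists_eq_smul {M : Type*} [AddCommGroup M]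
    {q a : ℤ} (hq : Prime q) {v w : M} (hv : ¬ ∃ u, v = q • u) (h : q • w = a • v) : q ∣ a := by
  by_contra ha
  obtain ⟨s, t, hst⟩ := hq.coprime_iff_not_dvd.mpr ha
  refine hv ⟨s • v + t • w, ?_⟩
  calc v = (s * q + t * a) • v := by rw [hst, one_smul]
    _ = q • (s • v + t • w) := by rw [smul_add, smul_comm q t w, h, smul_smul, smul_smul,
      ← add_smul, mul_comm q s]

section OrthogonalPair

variable {R N P : Type*} [CommRing R] [AddCommGroup N] [Module R N] [AddCommGroup P] [Module R P]
  {B : LinearMap.BilinForm R N} {u f : N}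

theorem LinearMap.BilinForm.mem_orthogonal_span_pair_iff {x : N} :
    x ∈ B.orthogonal (Submodule.span R {u, f}) ↔ B u x = 0 ∧ B f x = 0 := by
  rw [LinearMap.BilinForm.mem_orthogonal_iff]
  refine ⟨fun h => ⟨h u (Submodule.subset_span (by simp)), h f (Submodule.subset_span (by simp))⟩,
    fun ⟨hu, hf⟩ y hy => ?_⟩
  obtain ⟨a, b, rfl⟩ := Submodule.mem_span_pair.mp hy
  simp [hu, hf]

/-- Since `⟨f, f⟩ = 0` and `⟨u, f⟩ = 1`, `x ↦ x - ⟨u, x⟩ f` projects `f^⊥` onto `(u, f)^⊥`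
with kernel `R f`. -/
theorem LinearMap.BilinForm.exists_linearEquiv_orthogonal_span_pair (hff : B f f = 0)
    (huf : B u f = 1) {Φ : N →ₗ[R] P} {S : Submodule R P} (hΦf : Φ f = 0)
    (hker : LinearMap.ker Φ ⊓ LinearMap.ker (B f) ≤ R ∙ f)
    (hS : (LinearMap.ker (B f)).map Φ = S) :
    ∃ e : B.orthogonal (Submodule.span R {u, f}) ≃ₗ[R] S, ∀ x, (e x : P) = Φ x := by
  have hmaps : ∀ x : B.orthogonal (Submodule.span R {u, f}), Φ x ∈ S := fun x =>
    hS ▸ Submodule.mem_map_of_mem (mem_orthogonal_span_pair_iff.mp x.2).2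
  let φ := (Φ ∘ₗ Submodule.subtype _).codRestrict S hmaps
  have hinj : Function.Injective φ := by
    rw [← LinearMap.ker_eq_bot, LinearMap.ker_eq_bot']
    rintro ⟨x, hx⟩ hΦx
    obtain ⟨hux, hfx⟩ := mem_orthogonal_span_pair_iff.mp hx
    obtain ⟨c, rfl⟩ := Submodule.mem_span_singleton.mp
      (hker ⟨congrArg Subtype.val hΦx, hfx⟩)
    simp_all
  have hsurj : Function.Surjective φ := by
    rintro ⟨y, hy⟩
    obtain ⟨x, hfx, rfl⟩ := hS ▸ hy
    refine ⟨⟨x - B u x • f, mem_orthogonal_span_pair_iff.mpr ⟨?_, ?_⟩⟩, ?_⟩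
    · simp [huf]
    · simpa [hff] using hfx
    · ext
      change Φ (x - B u x • f) = Φ x
      simp [hΦf]
  exact ⟨LinearEquiv.ofBijective φ ⟨hinj, hsurj⟩, fun _ => rfl⟩

end OrthogonalPair

section Neighbor

variable {M : Type*} [AddCommGroup M] [Module ℤ M] {B : LinearMap.BilinForm ℤ M} {p : ℕ} {v : M}
  {n : ℤ}

noncomputable def neighborProj (p : ℕ) (v : M) : (ℤ × ℤ) × M →ₗ[ℤ] ℚ ⊗[ℤ] M :=
  TensorProduct.mk ℤ ℚ M 1 ∘ₗ LinearMap.snd ℤ (ℤ × ℤ) M -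
    LinearMap.toSpanSingleton ℤ _ ((p : ℚ)⁻¹ ⊗ₜ[ℤ] v) ∘ₗ LinearMap.fst ℤ ℤ ℤ ∘ₗ
      LinearMap.fst ℤ (ℤ × ℤ) M

@[simp]
theorem neighborProj_apply (x : (ℤ × ℤ) × M) :
    neighborProj p v x = (1 : ℚ) ⊗ₜ[ℤ] x.2 - x.1.1 • ((p : ℚ)⁻¹ ⊗ₜ[ℤ] v) :=
  rfl

theorem natCast_smul_inv_tmul (hp : p ≠ 0) : (p : ℤ) • ((p : ℚ)⁻¹ ⊗ₜ[ℤ] v) = (1 : ℚ) ⊗ₜ[ℤ] v := by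
  rw [smul_tmul', zsmul_eq_mul, Int.cast_natCast, mul_inv_cancel₀ (Nat.cast_ne_zero.mpr hp)]

theorem hypSum_apply (x y : (ℤ × ℤ) × M) :
    hypSum B x y = x.1.1 * y.1.2 + x.1.2 * y.1.1 + B x.2 y.2 :=
  rfl

theorem hypF₂_eq (hp : p ≠ 0) (hn : B v v = 2 * (p : ℤ) ^ 2 * n) :
    hypF₂ B p v = (((p : ℤ), -(p * n)), v) := by
  rw [hypF₂, hn, show 2 * (p : ℤ) ^ 2 * n = 2 * p * (p * n) by ring,
    Int.mul_ediv_cancel_left _ (by positivity)]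

theorem hypSum_hypF₂_eq_zero_iff (hp : p ≠ 0) (hn : B v v = 2 * (p : ℤ) ^ 2 * n)
    {x : (ℤ × ℤ) × M} : hypSum B (hypF₂ B p v) x = 0 ↔ B v x.2 = p * (n * x.1.1 - x.1.2) := by
  rw [hypF₂_eq hp hn, hypSum_apply]
  constructor <;> intro h <;> linear_combination h

theorem hypSum_hypF₂_self (hp : p ≠ 0) (hn : B v v = 2 * (p : ℤ) ^ 2 * n) :
    hypSum B (hypF₂ B p v) (hypF₂ B p v) = 0 := by
  rw [hypSum_hypF₂_eq_zero_iff hp hn, hypF₂_eq hp hn, hn]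
  ring

theorem neighborProj_hypF₂ (hp : p ≠ 0) : neighborProj p v (hypF₂ B p v) = 0 := by
  rw [neighborProj_apply, hypF₂, natCast_smul_inv_tmul hp, sub_self]

theorem map_neighborProj_ker_hypSum_hypF₂ (hB : B.IsSymm) (hp : p ≠ 0)
    (hn : B v v = 2 * (p : ℤ) ^ 2 * n) :
    (LinearMap.ker (hypSum B (hypF₂ B p v))).map (neighborProj p v) = neighborInQ B p v := by
  have hsymm : ∀ x, B x v = B v x := fun x => hB.eq x v
  apply le_antisymm
  · rintro _ ⟨x, hx, rfl⟩
    have hx' := (hypSum_hypF₂_eq_zero_iff hp hn).mp hx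
    rw [neighborProj_apply]
    refine Submodule.sub_mem _ (Submodule.mem_sup_left ⟨x.2, ?_, rfl⟩)
      (Submodule.mem_sup_right (Submodule.smul_mem _ _ (Submodule.mem_span_singleton_self _)))
    simp [Ideal.mem_span_singleton, hsymm, hx']
  · refine sup_le ?_ ((Submodule.span_singleton_le_iff_mem _ _).mpr ?_)
    · rintro _ ⟨k, hk, rfl⟩
      obtain ⟨d, hd⟩ := Ideal.mem_span_singleton'.mp hk
      rw [LinearMap.flip_apply, hsymm] at hd
      refine ⟨((0, -d), k), (hypSum_hypF₂_eq_zero_iff hp hn).mpr ?_, ?_⟩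
      · rw [← hd]
        ring
      · rw [neighborProj_apply, zero_smul, sub_zero]
        rfl
    · exact ⟨((-1, -n), 0), (hypSum_hypF₂_eq_zero_iff hp hn).mpr (by simp), by simp⟩

theorem ker_neighborProj_inf_ker_hypSum_hypF₂_le [Module.Flat ℤ M] (hp : p.Prime)
    (hvp : ¬ ∃ w : M, v = (p : ℤ) • w) (hn : B v v = 2 * (p : ℤ) ^ 2 * n) :
    LinearMap.ker (neighborProj p v) ⊓ LinearMap.ker (hypSum B (hypF₂ B p v)) ≤
      ℤ ∙ hypF₂ B p v := by
  rintro x ⟨hΦ, hF⟩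
  have hp0 := hp.ne_zero
  have hinj := Module.Flat.tensorProduct_mk_injective ℤ M ℚ
  have hx2 : (1 : ℚ) ⊗ₜ[ℤ] x.2 = x.1.1 • ((p : ℚ)⁻¹ ⊗ₜ[ℤ] v) := sub_eq_zero.mp hΦ
  have hpx : (p : ℤ) • x.2 = x.1.1 • v := hinj <| by
    rw [map_zsmul, map_zsmul, mk_apply, mk_apply, hx2, smul_comm, natCast_smul_inv_tmul hp0]
  obtain ⟨t, ht⟩ := Int.dvd_of_smul_eq_smul_of_not_exists_eq_smul
    (Nat.prime_iff_prime_int.mp hp) hvp hpx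
  have hx2' : x.2 = t • v := hinj <| by
    rw [map_zsmul, mk_apply, mk_apply, hx2, ht, mul_comm, mul_smul, natCast_smul_inv_tmul hp0]
  have hx12 : x.1.2 = t * -(p * n) := by
    have hF' := (hypSum_hypF₂_eq_zero_iff hp0 hn).mp hF
    rw [hx2', map_zsmul, hn, ht, smul_eq_mul] at hF'
    exact mul_left_cancel₀ (Int.natCast_ne_zero.mpr hp0) (by linear_combination hF')
  refine Submodule.mem_span_singleton.mpr ⟨t, ?_⟩
  rw [hypF₂_eq hp0 hn]
  ext
  · simp [ht, mul_comm]
  · simp [hx12]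
  · simp [hx2']

theorem hypSum_eq_baseChange_neighborProj (hB : B.IsSymm) (hp : p ≠ 0)
    (hn : B v v = 2 * (p : ℤ) ^ 2 * n) {x y : (ℤ × ℤ) × M}
    (hx : hypSum B (hypF₂ B p v) x = 0) (hy : hypSum B (hypF₂ B p v) y = 0) :
    ((hypSum B x y : ℤ) : ℚ) = B.baseChange ℚ (neighborProj p v x) (neighborProj p v y) := by
  rw [hypSum_hypF₂_eq_zero_iff hp hn] at hx hy
  have hsymm : B x.2 v = B v x.2 := hB.eq _ _
  simp only [neighborProj_apply, ← Int.cast_smul_eq_zsmul ℚ, map_sub, map_smul,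
    LinearMap.sub_apply, LinearMap.smul_apply, LinearMap.BilinForm.baseChange_tmul, smul_eq_mul]
  rw [hypSum_apply, hsymm, hx, hy, hn]
  push_cast
  field_simp
  ring

end Neighbor

theorem orthogonal_complement_isometric_neighbor_general {M : Type*} [AddCommGroup M] [Module ℤ M]
    [Module.Free ℤ M]
    (B : LinearMap.BilinForm ℤ M) (hBsymm : B.IsSymm)
    (p : ℕ) (hp : p.Prime)
    (v : M) (hvp : ¬ ∃ w : M, v = (p : ℤ) • w)
    (hvv : ∃ n : ℤ, B v v = 2 * (p : ℤ) ^ 2 * n)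
    (e₂ : (ℤ × ℤ) × M)
    (he₂f₂ : hypSum B e₂ (hypF₂ B p v) = 1) :
    ∃ e : (hypSum B).orthogonal (Submodule.span ℤ {e₂, hypF₂ B p v}) ≃ₗ[ℤ]
        neighborInQ B p v,
      ∀ x y : (hypSum B).orthogonal (Submodule.span ℤ {e₂, hypF₂ B p v}),
        ((hypSum B x y : ℤ) : ℚ) =
          B.baseChange ℚ (e x : ℚ ⊗[ℤ] M) (e y : ℚ ⊗[ℤ] M) := by
  obtain ⟨n, hn⟩ := hvv
  obtain ⟨e, he⟩ := LinearMap.BilinForm.exists_linearEquiv_orthogonal_span_pair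
    (hypSum_hypF₂_self hp.ne_zero hn) he₂f₂ (neighborProj_hypF₂ hp.ne_zero)
    (ker_neighborProj_inf_ker_hypSum_hypF₂_le hp hvp hn)
    (map_neighborProj_ker_hypSum_hypF₂ hBsymm hp.ne_zero hn)
  refine ⟨e, fun x y => ?_⟩
  rw [he, he]
  exact hypSum_eq_baseChange_neighborProj hBsymm hp.ne_zero hn
    (LinearMap.BilinForm.mem_orthogonal_span_pair_iff.mp x.2).2
    (LinearMap.BilinForm.mem_orthogonal_span_pair_iff.mp y.2).2

/-- with `f₂ = -(⟨v,v⟩/(2p))·f₁ + p·e₁ + v` and `e₂ ∈ N = U₁ ⊕ L₁` isotropic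
with `⟨e₂,f₂⟩ = 1`, the orthogonal complement `L₂` of `ℤe₂ + ℤf₂` in `N` is isometric to
the `p`-neighbor `L₁(v)` of `L₁`. -/
theorem orthogonal_complement_isometric_neighbor {M : Type*} [AddCommGroup M] [Module ℤ M]
    [Module.Free ℤ M] [Module.Finite ℤ M]
    (B : LinearMap.BilinForm ℤ M) (hBnd : B.Nondegenerate) (hBsymm : B.IsSymm)
    (heven : ∀ x : M, ∃ n : ℤ, B x x = 2 * n)
    (p : ℕ) (hp : p.Prime)
    {ι : Type*} [Fintype ι] [DecidableEq ι] (b : Module.Basis ι ℤ M)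
    (hdet : ¬ (p : ℤ) ∣ Matrix.det (Matrix.of fun i j => B (b i) (b j)))
    (v : M) (hvp : ¬ ∃ w : M, v = (p : ℤ) • w)
    (hvv : ∃ n : ℤ, B v v = 2 * (p : ℤ) ^ 2 * n)
    (e₂ : (ℤ × ℤ) × M) (he₂ : hypSum B e₂ e₂ = 0)
    (he₂f₂ : hypSum B e₂ (hypF₂ B p v) = 1) :
    ∃ e : (hypSum B).orthogonal (Submodule.span ℤ {e₂, hypF₂ B p v}) ≃ₗ[ℤ]
        neighborInQ B p v,
      ∀ x y : (hypSum B).orthogonal (Submodule.span ℤ {e₂, hypF₂ B p v}),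
        ((hypSum B x y : ℤ) : ℚ) =
          B.baseChange ℚ (e x : ℚ ⊗[ℤ] M) (e y : ℚ ⊗[ℤ] M) :=
  orthogonal_complement_isometric_neighbor_general B hBsymm p hp v hvp hvv e₂ he₂f₂
end

section
/- Let K be a field and f ∈ K[x]. Then every prime ideal 𝔭 of the polynomial ring K[x,y] containing y² − f(x) is of the form 𝔭 = (y − h(x), g(x)) or of the form 𝔭 = (y² − f(x), g(x)) for some polynomials h(x), g(x) ∈ K[x], where g generates the ideal 𝔭 ∩ K[x] of K[x]. -/
/-!
Let `𝔮 = 𝔭 ∩ K[x] = (g)`. Reducing modulo a monic element of `𝔭` shows that `𝔭` is generated by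
that element together with `g` as soon as every element of `𝔭` of smaller `y`-degree has its
coefficients in `𝔮`. If some `y − h(x)` lies in `𝔭`, use it. Otherwise reduce modulo `y² − f`: a
remainder `a y + b ∈ 𝔭` has `a ∈ 𝔮` (and then `b ∈ 𝔮`), because `a ∉ 𝔮` would produce some
`y − h ∈ 𝔭`. When `𝔮` is maximal, invert `a` modulo `𝔮`. When `𝔮 = 0`, the norm `a² f − b²` lies
in `𝔮`, so `b² = a² f`, hence `b = a c` since `K[x]` is integrally closed, and `a y + b = a (y + c)`
with `a ∉ 𝔭`.
-/

open Polynomial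

namespace Ideal

variable {R : Type*} [CommRing R] {P : Ideal R[X]}

theorem eq_span_singleton_sup_map_comap_C_of_monic {q : R[X]} (hq : q.Monic) (hqP : q ∈ P)
    (hred : ∀ r ∈ P, r.degree < q.degree → r ∈ (P.comap C).map C) :
    P = span {q} ⊔ (P.comap C).map C := by
  nontriviality R
  refine le_antisymm (fun p hp => ?_) (sup_le ((span_singleton_le_iff_mem P).2 hqP) map_comap_le)
  have hrem : p %ₘ q ∈ P := by
    rw [modByMonic_eq_sub_mul_div p q]
    exact P.sub_mem hp (P.mul_mem_right _ hqP)
  rw [← modByMonic_add_div p q]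
  exact add_mem (mem_sup_right (hred _ hrem (degree_modByMonic_lt p hq)))
    (mem_sup_left (mem_span_singleton.2 (dvd_mul_right q _)))

theorem eq_span_X_sub_C_sup_map_comap_C {h : R} (hX : X - C h ∈ P) :
    P = span {X - C h} ⊔ (P.comap C).map C := by
  refine eq_span_singleton_sup_map_comap_C_of_monic (monic_X_sub_C h) hX fun r hr hdeg => ?_
  have hdeg' : r.degree ≤ 0 :=
    Nat.WithBot.lt_one_iff_le_zero.mp (hdeg.trans_le (degree_X_sub_C_le h))
  rw [eq_C_of_degree_le_zero hdeg'] at hr ⊢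
  exact mem_map_of_mem C hr

theorem C_sq_mul_sub_sq_mem {f a b : R} (hf : X ^ 2 - C f ∈ P) (hr : C a * X + C b ∈ P) :
    C (a ^ 2 * f - b ^ 2) ∈ P := by
  have hnorm : C (a ^ 2 * f - b ^ 2) =
      (C a * X + C b) * (C a * X - C b) - C a ^ 2 * (X ^ 2 - C f) := by
    simp only [map_sub, map_mul, map_pow]
    ring
  rw [hnorm]
  exact P.sub_mem (P.mul_mem_right _ hr) (P.mul_mem_left _ hf)

theorem exists_X_sub_C_mem_of_isMaximal_comap {a b : R} (hmax : (P.comap C).IsMaximal)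
    (hr : C a * X + C b ∈ P) (ha : a ∉ P.comap C) : ∃ h, X - C h ∈ P := by
  obtain ⟨v, i, hi, hvi⟩ := hmax.exists_inv ha
  refine ⟨-(v * b), ?_⟩
  have hX : X - C (-(v * b)) = C v * (C a * X + C b) + C i * X := by
    have hvi' : C v * C a + C i = 1 := by rw [← map_mul, ← map_add, hvi, map_one]
    simp only [map_neg, map_mul]
    linear_combination (-X) * hvi'
  rw [hX]
  exact P.add_mem (P.mul_mem_left _ hr) (P.mul_mem_right _ hi)

theorem exists_X_sub_C_mem_of_comap_eq_bot [IsDomain R] [IsIntegrallyClosed R] (hP : P.IsPrime)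
    (hbot : P.comap C = ⊥) {f a b : R} (hf : X ^ 2 - C f ∈ P) (hr : C a * X + C b ∈ P)
    (ha : a ∉ P.comap C) : ∃ h, X - C h ∈ P := by
  have hnorm : a ^ 2 * f - b ^ 2 ∈ P.comap C := C_sq_mul_sub_sq_mem hf hr
  rw [hbot, mem_bot, sub_eq_zero] at hnorm
  obtain ⟨c, rfl⟩ : a ∣ b := (IsIntegrallyClosed.pow_dvd_pow_iff two_ne_zero).1 ⟨f, hnorm.symm⟩
  have hfactor : C a * X + C (a * c) = C a * (X - C (-c)) := by
    simp only [map_mul, map_neg]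
    ring
  rw [hfactor] at hr
  exact ⟨-c, (hP.mem_or_mem hr).resolve_left ha⟩

variable [IsDomain R] [IsPrincipalIdealRing R]

theorem mem_map_comap_C_of_degree_le_one (hP : P.IsPrime) {f : R} (hf : X ^ 2 - C f ∈ P)
    (hlin : ∀ h, X - C h ∉ P) {r : R[X]} (hr : r ∈ P) (hdeg : r.degree ≤ 1) :
    r ∈ (P.comap C).map C := by
  set a := r.coeff 1
  set b := r.coeff 0
  have hre : r = C a * X + C b := eq_X_add_C_of_degree_le_one hdeg
  rw [hre] at hr ⊢
  have ha : a ∈ P.comap C := by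
    by_contra ha
    obtain ⟨h, hh⟩ : ∃ h, X - C h ∈ P := by
      by_cases hbot : P.comap C = ⊥
      · exact exists_X_sub_C_mem_of_comap_eq_bot hP hbot hf hr ha
      · exact exists_X_sub_C_mem_of_isMaximal_comap ((hP.comap C).isMaximal hbot) hr ha
    exact hlin h hh
  have hb : C b ∈ P := by
    rw [← add_sub_cancel_left (C a * X) (C b)]
    exact P.sub_mem hr (P.mul_mem_right _ ha)
  exact add_mem (mul_mem_right _ _ (mem_map_of_mem C ha)) (mem_map_of_mem C hb)

theorem eq_span_X_sq_sub_C_sup_map_comap_C (hP : P.IsPrime) {f : R} (hf : X ^ 2 - C f ∈ P)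
    (hlin : ∀ h, X - C h ∉ P) : P = span {X ^ 2 - C f} ⊔ (P.comap C).map C := by
  have hq : (X ^ 2 - C f : R[X]).Monic := monic_X_pow_sub_C f two_ne_zero
  refine eq_span_singleton_sup_map_comap_C_of_monic hq hf fun r hr hdeg => ?_
  rw [degree_X_pow_sub_C two_pos] at hdeg
  exact mem_map_comap_C_of_degree_le_one hP hf hlin hr (Order.le_of_lt_succ hdeg)

end Ideal

/-- every prime ideal `𝔭` of `K[x][y]` containing `y² − f(x)` is of the form
`𝔭 = (y − h(x), g(x))` or `𝔭 = (y² − f(x), g(x))` for some `h, g ∈ K[x]`, where `g`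
generates the ideal `𝔭 ∩ K[x]`. -/
theorem prime_over_hyperelliptic {K : Type*} [Field K] (f : K[X])
    (𝔭 : Ideal (Polynomial K[X])) (h𝔭 : 𝔭.IsPrime)
    (hmem : (X : Polynomial K[X]) ^ 2 - C f ∈ 𝔭) :
    ∃ g : K[X],
      𝔭.comap (C : K[X] →+* Polynomial K[X]) = Ideal.span {g} ∧
      ((∃ h : K[X], 𝔭 = Ideal.span {(X : Polynomial K[X]) - C h, C g}) ∨
        𝔭 = Ideal.span {(X : Polynomial K[X]) ^ 2 - C f, C g}) := by
  set g := Submodule.IsPrincipal.generator (𝔭.comap C)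
  have hg : 𝔭.comap C = Ideal.span {g} := (Ideal.span_singleton_generator _).symm
  have hmap : (𝔭.comap C).map C = Ideal.span {C g} := by
    rw [hg, Ideal.map_span, Set.image_singleton]
  refine ⟨g, hg, ?_⟩
  by_cases hlin : ∃ h, X - C h ∈ 𝔭
  · obtain ⟨h, hh⟩ := hlin
    exact .inl ⟨h, (Ideal.eq_span_X_sub_C_sup_map_comap_C hh).trans
      (by rw [hmap, Ideal.span_insert])⟩
  · push Not at hlin
    exact .inr ((Ideal.eq_span_X_sq_sub_C_sup_map_comap_C h𝔭 hmem hlin).trans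
      (by rw [hmap, Ideal.span_insert]))
end

section
/- Let C be the 6×6 integer matrix [[−4,1,1,0,0,1],[1,−4,1,1,0,0],[1,1,−4,1,1,0],[0,1,1,−4,1,1],[0,0,1,1,−4,1],[1,0,0,1,1,−4]]. Then C is symmetric and negative definite (xᵀCx < 0 for every nonzero x ∈ ℝ⁶), det C = 1183 = 7·13², and C has no roots: there is no x ∈ ℤ⁶ with xᵀCx = −2. -/
open Matrix

/-!
Writing out `xᵀCx`, the form `−xᵀCx` is the sum of `(xᵢ − xⱼ)²` over the fourteen pairs
`i < j` with `Cᵢⱼ = 1`, plus `xᵢ²` for the four rows `i = 0, 1, 4, 5` that contain only three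
such entries: a graph Laplacian plus a nonnegative diagonal. Six of these squares, those of
`x₀, x₁, x₀ − x₂, x₁ − x₃, x₄, x₅`, are squares of coordinates that determine `x`, so the form
is positive definite. For a root all six of these integers are at most `1` in absolute value,
which leaves `3⁶` candidates to check.
-/

/-- The Gram matrix `C` of the Mordell–Weil lattice: a negative definite even lattice of
rank 6 and determinant `1183 = 7·13²` without roots. -/
def Cmat : Matrix (Fin 6) (Fin 6) ℤ :=
  !![-4,  1,  1,  0,  0,  1;
      1, -4,  1,  1,  0,  0;
      1,  1, -4,  1,  1,  0;
      0,  1,  1, -4,  1,  1;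
      0,  0,  1,  1, -4,  1;
      1,  0,  0,  1,  1, -4]

section

variable {R : Type*}

def negCmatForm [Ring R] (x : Fin 6 → R) : R :=
  (x 0 - x 1) ^ 2 + (x 0 - x 2) ^ 2 + (x 0 - x 5) ^ 2 + (x 1 - x 2) ^ 2 + (x 1 - x 3) ^ 2
    + (x 2 - x 3) ^ 2 + (x 2 - x 4) ^ 2 + (x 3 - x 4) ^ 2 + (x 3 - x 5) ^ 2 + (x 4 - x 5) ^ 2
    + x 0 ^ 2 + x 1 ^ 2 + x 4 ^ 2 + x 5 ^ 2

def cmatCoords [Ring R] (x : Fin 6 → R) : Fin 6 → R :=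
  ![x 0, x 1, x 0 - x 2, x 1 - x 3, x 4, x 5]

def ofCmatCoords [Ring R] (y : Fin 6 → R) : Fin 6 → R :=
  ![y 0, y 1, y 0 - y 2, y 1 - y 3, y 4, y 5]

theorem ofCmatCoords_cmatCoords [Ring R] (x : Fin 6 → R) : ofCmatCoords (cmatCoords x) = x := by
  ext i
  fin_cases i <;> simp [ofCmatCoords, cmatCoords]

theorem dotProduct_map_Cmat_mulVec [CommRing R] (x : Fin 6 → R) :
    x ⬝ᵥ Cmat.map ((↑) : ℤ → R) *ᵥ x = -negCmatForm x := by
  simp [Cmat, negCmatForm, dotProduct, mulVec, Fin.sum_univ_succ]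
  ring

theorem sq_cmatCoords_le_negCmatForm [CommRing R] [LinearOrder R] [IsStrictOrderedRing R]
    (x : Fin 6 → R) (i : Fin 6) : cmatCoords x i ^ 2 ≤ negCmatForm x := by
  fin_cases i <;>
    simp only [cmatCoords, negCmatForm, Fin.isValue, Fin.zero_eta, Fin.mk_one, Fin.reduceFinMk,
      cons_val_zero, cons_val_one, cons_val] <;>
    linarith [sq_nonneg (x 0 - x 1), sq_nonneg (x 0 - x 2), sq_nonneg (x 0 - x 5),
      sq_nonneg (x 1 - x 2), sq_nonneg (x 1 - x 3), sq_nonneg (x 2 - x 3),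
      sq_nonneg (x 2 - x 4), sq_nonneg (x 3 - x 4), sq_nonneg (x 3 - x 5),
      sq_nonneg (x 4 - x 5), sq_nonneg (x 0), sq_nonneg (x 1), sq_nonneg (x 4), sq_nonneg (x 5)]

theorem cmatCoords_ne_zero [Ring R] {x : Fin 6 → R} (hx : x ≠ 0) : cmatCoords x ≠ 0 := by
  contrapose! hx
  rw [← ofCmatCoords_cmatCoords x, hx]
  ext i
  fin_cases i <;> simp [ofCmatCoords]

theorem negCmatForm_pos [CommRing R] [LinearOrder R] [IsStrictOrderedRing R] {x : Fin 6 → R}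
    (hx : x ≠ 0) : 0 < negCmatForm x := by
  obtain ⟨i, hi⟩ := Function.ne_iff.mp (cmatCoords_ne_zero hx)
  exact (sq_pos_of_ne_zero hi).trans_le (sq_cmatCoords_le_negCmatForm x i)

end

theorem abs_le_one_of_sq_le_two {z : ℤ} (h : z ^ 2 ≤ 2) : |z| ≤ 1 := by
  rw [abs_le]
  constructor <;> nlinarith

theorem negCmatForm_ofCmatCoords_ne_two {y : Fin 6 → ℤ} (hy : ∀ i, |y i| ≤ 1) :
    negCmatForm (ofCmatCoords y) ≠ 2 := by
  have box : ∀ a ∈ Finset.Icc (-1 : ℤ) 1, ∀ b ∈ Finset.Icc (-1 : ℤ) 1,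
      ∀ c ∈ Finset.Icc (-1 : ℤ) 1, ∀ d ∈ Finset.Icc (-1 : ℤ) 1,
      ∀ e ∈ Finset.Icc (-1 : ℤ) 1, ∀ f ∈ Finset.Icc (-1 : ℤ) 1,
      negCmatForm ![a, b, a - c, b - d, e, f] ≠ 2 := by
    decide
  have mem (i : Fin 6) : y i ∈ Finset.Icc (-1 : ℤ) 1 := Finset.mem_Icc.mpr (abs_le.mp (hy i))
  exact box _ (mem 0) _ (mem 1) _ (mem 2) _ (mem 3) _ (mem 4) _ (mem 5)

theorem negCmatForm_ne_two (x : Fin 6 → ℤ) : negCmatForm x ≠ 2 := by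
  intro h
  have small (i : Fin 6) : |cmatCoords x i| ≤ 1 :=
    abs_le_one_of_sq_le_two (h ▸ sq_cmatCoords_le_negCmatForm x i)
  exact negCmatForm_ofCmatCoords_ne_two small (by rwa [ofCmatCoords_cmatCoords])

theorem dotProduct_Cmat_mulVec (x : Fin 6 → ℤ) : x ⬝ᵥ Cmat *ᵥ x = -negCmatForm x :=
  dotProduct_map_Cmat_mulVec x

theorem det_Cmat : Cmat.det = 1183 := by
  simp [Cmat, det_succ_row_zero, Fin.sum_univ_succ, Fin.succAbove]

/-- `C` is symmetric, negative definite, has determinant `1183 = 7·13²`,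
and has no roots: there is no `x ∈ ℤ⁶` with `xᵀCx = −2`. -/
theorem Cmat_properties :
    Cmat.transpose = Cmat ∧
      (∀ x : Fin 6 → ℝ, x ≠ 0 →
        dotProduct x ((Cmat.map ((↑) : ℤ → ℝ)).mulVec x) < 0) ∧
      Cmat.det = 1183 ∧ (1183 : ℤ) = 7 * 13 ^ 2 ∧
      ¬ ∃ x : Fin 6 → ℤ, dotProduct x (Cmat.mulVec x) = -2 := by
  refine ⟨by decide, fun x hx => ?_, det_Cmat, by norm_num, ?_⟩
  · rw [dotProduct_map_Cmat_mulVec]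
    exact neg_neg_of_pos (negCmatForm_pos hx)
  · rintro ⟨x, hx⟩
    rw [dotProduct_Cmat_mulVec, neg_inj] at hx
    exact negCmatForm_ne_two x hx
end

section
/- Let C be the 6×6 integer matrix [[−4,1,1,0,0,1],[1,−4,1,1,0,0],[1,1,−4,1,1,0],[0,1,1,−4,1,1],[0,0,1,1,−4,1],[1,0,0,1,1,−4]] and let g_C be the 6×6 integer matrix with columns given by [[0,0,0,0,0,−1],[1,0,0,0,0,−1],[0,1,0,0,0,−1],[0,0,1,0,0,−1],[0,0,0,1,0,−1],[0,0,0,0,1,−1]] (rows as displayed). Then g_Cᵀ·C·g_C = C; for every nonzero x ∈ ℤ⁶ one has −xᵀCx ≥ 4; there are exactly 14 vectors x ∈ ℤ⁶ with −xᵀCx = 4 (i.e. exactly 7 up to sign); and these 14 minimal vectors form a single orbit under the group of matrices generated by −I and g_C. -/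
open Matrix

/-- The matrix `g_C` of the order-7 isometry of the lattice `C`. -/
def gC : Matrix (Fin 6) (Fin 6) ℤ :=
  !![0, 0, 0, 0, 0, -1;
     1, 0, 0, 0, 0, -1;
     0, 1, 0, 0, 0, -1;
     0, 0, 1, 0, 0, -1;
     0, 0, 0, 1, 0, -1;
     0, 0, 0, 0, 1, -1]

/-!
Extending `x ∈ ℤ⁶` by `x₆ = 0`, the norm `-xᵀCx` is the Dirichlet energy
`∑ᵢ (xᵢ - xᵢ₊₁)² + (xᵢ - xᵢ₊₂)²` (indices mod 7) of `x` on the circulant graph `C₇(1,2)`,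
on which `g_C` acts as the rotation `i ↦ i + 1`. Any two vertices of this graph are joined by
four edge-disjoint paths, and `d ≤ d²` for integers, so the energy is at least `4 |xᵢ - xⱼ|`.
Hence the minimum is `4` and minimal vectors have entries in `{-1, 0, 1}`; a finite check shows
that they are the `14` vectors `(-g_C)ᵏ e₀`, a single orbit of the element `-g_C` of order 14.
-/

def circulantEnergy (y : Fin 7 → ℤ) : ℤ :=
  ∑ i, ((y i - y (i + 1)) ^ 2 + (y i - y (i + 2)) ^ 2)

lemma four_mul_sub_le_circulantEnergy (y : Fin 7 → ℤ) (a b : Fin 7) :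
    4 * (y a - y b) ≤ circulantEnergy y := by
  have e := fun i j : Fin 7 => Int.le_self_sq (y i - y j)
  simp only [circulantEnergy, Fin.sum_univ_seven, Fin.isValue, Fin.reduceAdd]
  fin_cases a <;> fin_cases b <;>
  · simp only [Fin.reduceFinMk, Fin.mk_one, Fin.zero_eta, Fin.isValue]
    linarith [e 0 1, e 1 2, e 2 3, e 3 4, e 4 5, e 5 6, e 6 0, e 1 0, e 2 1, e 3 2, e 4 3, e 5 4,
      e 6 5, e 0 6, e 0 2, e 1 3, e 2 4, e 3 5, e 4 6, e 5 0, e 6 1, e 2 0, e 3 1, e 4 2, e 5 3,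
      e 6 4, e 0 5, e 1 6]

lemma four_mul_abs_sub_le_circulantEnergy (y : Fin 7 → ℤ) (a b : Fin 7) :
    4 * |y a - y b| ≤ circulantEnergy y := by
  rw [abs_eq_max_neg, mul_max_of_nonneg _ _ (by norm_num), neg_sub]
  exact max_le (four_mul_sub_le_circulantEnergy y a b) (four_mul_sub_le_circulantEnergy y b a)

lemma neg_dotProduct_Cmat_mulVec (x : Fin 6 → ℤ) :
    -(x ⬝ᵥ Cmat *ᵥ x) = circulantEnergy (Fin.snoc x 0) := by
  have hsnoc : (Fin.snoc x 0 : Fin 7 → ℤ) = ![x 0, x 1, x 2, x 3, x 4, x 5, 0] := by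
    ext i; fin_cases i <;> rfl
  simp only [hsnoc, circulantEnergy, Cmat, dotProduct, mulVec, of_apply, Fin.sum_univ_six,
    Fin.sum_univ_seven, cons_val, Fin.isValue, Fin.reduceAdd]
  ring

lemma four_mul_abs_le_neg_dotProduct_Cmat_mulVec (x : Fin 6 → ℤ) (i : Fin 6) :
    4 * |x i| ≤ -(x ⬝ᵥ Cmat *ᵥ x) := by
  have := four_mul_abs_sub_le_circulantEnergy (Fin.snoc x 0) i.castSucc (Fin.last 6)
  rwa [Fin.snoc_castSucc, Fin.snoc_last, sub_zero, ← neg_dotProduct_Cmat_mulVec] at this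

lemma four_le_neg_dotProduct_Cmat_mulVec {x : Fin 6 → ℤ} (hx : x ≠ 0) :
    4 ≤ -(x ⬝ᵥ Cmat *ᵥ x) := by
  obtain ⟨i, hi⟩ := Function.ne_iff.1 hx
  have := four_mul_abs_le_neg_dotProduct_Cmat_mulVec x i
  have := Int.one_le_abs hi
  omega

def minimalVectors : Finset (Fin 6 → ℤ) :=
  (Finset.range 14).image fun k => (-gC) ^ k *ᵥ Pi.single 0 1

lemma filter_piFinset_eq_minimalVectors :
    (Fintype.piFinset fun _ => Finset.Icc (-1 : ℤ) 1).filter (fun x => x ⬝ᵥ Cmat *ᵥ x = -4) =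
      minimalVectors := by
  decide +kernel

lemma dotProduct_Cmat_mulVec_eq_neg_four_iff (x : Fin 6 → ℤ) :
    x ⬝ᵥ Cmat *ᵥ x = -4 ↔ x ∈ minimalVectors := by
  rw [← filter_piFinset_eq_minimalVectors, Finset.mem_filter, Fintype.mem_piFinset]
  refine ⟨fun hx => ⟨fun i => ?_, hx⟩, And.right⟩
  have := four_mul_abs_le_neg_dotProduct_Cmat_mulVec x i
  rw [Finset.mem_Icc, ← abs_le]
  omega

lemma card_minimalVectors : minimalVectors.card = 14 := by
  decide +kernel

lemma neg_gC_pow_fourteen : (-gC) ^ 14 = 1 := by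
  decide +kernel

lemma neg_gC_mem_closure : -gC ∈ Submonoid.closure {-(1 : Matrix (Fin 6) (Fin 6) ℤ), gC} := by
  rw [← neg_one_mul gC]
  exact mul_mem (Submonoid.subset_closure (Set.mem_insert _ _))
    (Submonoid.subset_closure (Set.mem_insert_of_mem _ (Set.mem_singleton gC)))

lemma exists_mem_closure_mulVec_eq {x y : Fin 6 → ℤ} (hx : x ∈ minimalVectors)
    (hy : y ∈ minimalVectors) :
    ∃ m ∈ Submonoid.closure {-(1 : Matrix (Fin 6) (Fin 6) ℤ), gC}, m *ᵥ x = y := by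
  obtain ⟨a, ha, rfl⟩ := Finset.mem_image.1 hx
  obtain ⟨b, -, rfl⟩ := Finset.mem_image.1 hy
  refine ⟨(-gC) ^ (b + (14 - a)), pow_mem neg_gC_mem_closure _, ?_⟩
  rw [mulVec_mulVec, ← pow_add, add_assoc, Nat.sub_add_cancel (Finset.mem_range.1 ha).le,
    pow_add, neg_gC_pow_fourteen, mul_one]

/-- `g_C` is an isometry of `C`; the minimum of the positive definite
lattice `C(−1)` is 4; there are exactly 14 minimal vectors (7 up to sign); and the
minimal vectors form a single orbit under the group generated by `−I` and `g_C`. -/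
theorem Cmat_minimal_vectors :
    gC.transpose * Cmat * gC = Cmat ∧
      (∀ x : Fin 6 → ℤ, x ≠ 0 → 4 ≤ -(dotProduct x (Cmat.mulVec x))) ∧
      Set.ncard {x : Fin 6 → ℤ | dotProduct x (Cmat.mulVec x) = -4} = 14 ∧
      ∀ x y : Fin 6 → ℤ,
        dotProduct x (Cmat.mulVec x) = -4 →
        dotProduct y (Cmat.mulVec y) = -4 →
        ∃ m ∈ Submonoid.closure {-(1 : Matrix (Fin 6) (Fin 6) ℤ), gC},
          m.mulVec x = y := by
  have hmin : {x : Fin 6 → ℤ | dotProduct x (Cmat.mulVec x) = -4} = minimalVectors :=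
    Set.ext dotProduct_Cmat_mulVec_eq_neg_four_iff
  refine ⟨by decide, fun x => four_le_neg_dotProduct_Cmat_mulVec, ?_, fun x y hx hy => ?_⟩
  · rw [hmin, Set.ncard_coe_finset, card_minimalVectors]
  · exact exists_mem_closure_mulVec_eq ((dotProduct_Cmat_mulVec_eq_neg_four_iff x).1 hx)
      ((dotProduct_Cmat_mulVec_eq_neg_four_iff y).1 hy)
end

section
/- The polynomial q(w) = w⁶ − 2w⁵ + 2w⁴ − 3w³ + 2w² − 2w + 1 is irreducible over ℚ, and the number field K = ℚ[w]/(q(w)) contains a root of the polynomial x³ + x² − 2x − 1 (the minimal polynomial of ζ₇ + ζ₇⁻¹); in particular K contains a subfield isomorphic to the real cubic subfield ℚ(ζ₇ + ζ₇⁻¹) of the 7th cyclotomic field. -/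
/-!
Reducing mod 2 turns `q` into `X⁶ + X³ + 1`, the ninth cyclotomic polynomial over `𝔽₂`. Its
irreducible factors have degree the order of 2 in `(ℤ/9)ˣ`, which is `6 = φ 9`, so it is
irreducible; as `q` is monic, `q` is irreducible over `ℤ` and hence over `ℚ`. A root of
`x³ + x² − 2x − 1` in `ℚ[w]/(q)` is the class of `−w⁴ + 2w³ − w² + w − 1`.
-/

open Polynomial

/-- The sextic polynomial `q(w) = w⁶ − 2w⁵ + 2w⁴ − 3w³ + 2w² − 2w + 1` defining the
coefficient field of the surface `S₁`. -/
noncomputable def qpoly : ℚ[X] :=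
  X ^ 6 - 2 * X ^ 5 + 2 * X ^ 4 - 3 * X ^ 3 + 2 * X ^ 2 - 2 * X + 1

theorem cyclotomic_nine (R : Type*) [CommRing R] : cyclotomic 9 R = X ^ 6 + X ^ 3 + 1 := by
  rw [show 9 = 3 ^ (1 + 1) by norm_num, cyclotomic_prime_pow_eq_geom_sum Nat.prime_three]
  simp only [Finset.sum_range_succ, Finset.sum_range_zero]
  ring

theorem orderOf_two_units_zmod_nine :
    orderOf (ZMod.unitOfCoprime 2 (by norm_num : Nat.Coprime 2 9)) = 6 := by
  rw [orderOf_eq_iff (by norm_num)]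
  decide

theorem irreducible_cyclotomic_nine_zmod_two : Irreducible (cyclotomic 9 (ZMod 2)) :=
  have : Fact (Nat.Prime 2) := ⟨Nat.prime_two⟩
  ZMod.irreducible_of_dvd_cyclotomic_of_natDegree (by norm_num) dvd_rfl
    (by rw [natDegree_cyclotomic]; exact orderOf_two_units_zmod_nine.symm)

theorem Polynomial.Monic.irreducible_map_rat_of_irreducible_map_zmod {f : ℤ[X]} (hf : f.Monic)
    (p : ℕ) [Fact p.Prime] (h : Irreducible (f.map (Int.castRingHom (ZMod p)))) :
    Irreducible (f.map (Int.castRingHom ℚ)) :=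
  (IsPrimitive.Int.irreducible_iff_irreducible_map_cast hf.isPrimitive).mp
    (hf.irreducible_of_irreducible_map _ _ h)

theorem AdjoinRoot.aeval_mk_eq_zero_of_dvd_comp {R : Type*} [CommRing R] {f g p : R[X]}
    (h : f ∣ g.comp p) : aeval (AdjoinRoot.mk f p) g = 0 := by
  rw [← AdjoinRoot.aeval_eq, ← aeval_comp, AdjoinRoot.aeval_eq]
  exact AdjoinRoot.mk_eq_zero.mpr h

noncomputable def qpolyInt : ℤ[X] :=
  X ^ 6 - 2 * X ^ 5 + 2 * X ^ 4 - 3 * X ^ 3 + 2 * X ^ 2 - 2 * X + 1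

theorem qpolyInt_monic : qpolyInt.Monic := by
  unfold qpolyInt
  monicity!

theorem qpolyInt_map_rat : qpolyInt.map (Int.castRingHom ℚ) = qpoly := by
  simp [qpolyInt, qpoly]

theorem qpolyInt_map_zmod_two :
    qpolyInt.map (Int.castRingHom (ZMod 2)) = cyclotomic 9 (ZMod 2) := by
  have h2 : (2 : (ZMod 2)[X]) = 0 := by exact_mod_cast CharP.cast_eq_zero (ZMod 2)[X] 2
  rw [cyclotomic_nine]
  simp only [qpolyInt, Polynomial.map_add, Polynomial.map_sub, Polynomial.map_mul,
    Polynomial.map_pow, Polynomial.map_X, Polynomial.map_ofNat, Polynomial.map_one]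
  linear_combination (-X ^ 5 + X ^ 4 - 2 * X ^ 3 + X ^ 2 - X : (ZMod 2)[X]) * h2

theorem qpoly_irreducible : Irreducible qpoly := by
  have : Fact (Nat.Prime 2) := ⟨Nat.prime_two⟩
  rw [← qpolyInt_map_rat]
  exact qpolyInt_monic.irreducible_map_rat_of_irreducible_map_zmod 2
    (qpolyInt_map_zmod_two ▸ irreducible_cyclotomic_nine_zmod_two)

theorem qpoly_dvd_real_cubic_comp :
    qpoly ∣ (X ^ 3 + X ^ 2 - 2 * X - 1 : ℚ[X]).comp (-X ^ 4 + 2 * X ^ 3 - X ^ 2 + X - 1) :=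
  ⟨-X ^ 6 + 4 * X ^ 5 - 5 * X ^ 4 + 2 * X ^ 3 - X ^ 2 + X + 1, by
    simp only [qpoly, sub_comp, add_comp, mul_comp, pow_comp, X_comp, ofNat_comp, one_comp]
    ring⟩

/-- `q` is irreducible over ℚ, and the number field `K = ℚ[w]/(q(w))`
contains a root of `x³ + x² − 2x − 1`, the minimal polynomial of `ζ₇ + ζ₇⁻¹`; in
particular `K` contains a subfield isomorphic to `ℚ(ζ₇ + ζ₇⁻¹)`. -/
theorem qpoly_irreducible_and_contains_real_cubic :
    Irreducible qpoly ∧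
      ∃ α : AdjoinRoot qpoly, α ^ 3 + α ^ 2 - 2 * α - 1 = 0 :=
  ⟨qpoly_irreducible, _, by
    simpa only [map_sub, map_add, map_mul, map_pow, aeval_X, map_ofNat, map_one] using
      AdjoinRoot.aeval_mk_eq_zero_of_dvd_comp qpoly_dvd_real_cubic_comp⟩
end
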